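/- Under the stated operator setting, let 1 ≤ k ≤ r and let Φ be an n-dimensional subspace of H with n ≥ k, with Ritz values λ₁ ≥ ⋯ ≥ λ_n of T on Φ. Then (1 − d_2(span{η₁, …, η_k}, Φ)²) · μ_k ≤ λ_k ≤ μ_k. -/

import Mathlib

open scoped RealInnerProductSpace ENNReal
open Submodule Filter

noncomputable section

variable {H : Type*} [NormedAddCommGroup H] [InnerProductSpace ℝ H] [CompleteSpace H]

/-- Orthogonal projection onto `U`, as an operator `H → H` (defined to be `0` in the
degenerate case where `U` admits no orthogonal projection). -/
noncomputable def proj (U : Submodule ℝ H) : H →L[ℝ] H := by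
  classical
  exact if h : HasOrthogonalProjection U then
    (haveI := h; U.subtypeL ∘L orthogonalProjection U)
  else 0

/-- Squared Hilbert–Schmidt norm of an operator, computed in a fixed Hilbert basis of `H`. -/
noncomputable def hsNormSq (A : H →L[ℝ] H) : ℝ≥0∞ :=
  ∑' i : (exists_hilbertBasis ℝ H).choose,
    (‖A ((exists_hilbertBasis ℝ H).choose_spec.choose i)‖₊ : ℝ≥0∞) ^ 2

/-- Hilbert–Schmidt (Frobenius) norm of an operator. -/
noncomputable def hsNorm (A : H →L[ℝ] H) : ℝ := Real.sqrt (hsNormSq A).toReal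

/-- Projection distance `d_F(U, W) = ‖P_{Wᗮ} P_U‖_F`. -/
noncomputable def dF (U W : Submodule ℝ H) : ℝ := hsNorm ((proj Wᗮ) ∘L (proj U))

/-- Gap distance `d₂(U, W) = ‖P_{Wᗮ} P_U‖₂`. -/
noncomputable def d2 (U W : Submodule ℝ H) : ℝ := ‖(proj Wᗮ) ∘L (proj U)‖

/-! Both bounds are Courant–Fischer arguments: a `k`-dimensional subspace contains a unit vector
orthogonal to any `k - 1` given vectors. Write `E_k = span {η₁, …, η_k}`.

* Upper bound: a unit vector `w ∈ span {γ₁, …, γ_k}` orthogonal to `η₁, …, η_{k-1}` satisfies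
  `λ_k ≤ ⟪w, T w⟫ ≤ μ_k`, by expanding `⟪w, T w⟫` in the Ritz vectors and in the eigenvectors.
* Lower bound: for a unit vector `u ∈ E_k` orthogonal to `γ₁, …, γ_{k-1}` put `v = P_Φ u`.
  Then `v ⊥ γ₁, …, γ_{k-1}`, so `⟪v, T v⟫ ≤ λ_k ‖v‖²`, while
  `⟪v, T v⟫ ≥ μ_k ‖P_{E_k} v‖² ≥ μ_k ‖v‖⁴` because `‖v‖² = ⟪u, v⟫ ≤ ‖P_{E_k} v‖`.
  Dividing by `‖v‖²` and using `‖v‖² ≥ 1 - d₂(E_k, Φ)²` gives the claim. -/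

instance {K V ι : Type*} [DivisionRing K] [AddCommGroup V] [Module K V] (e : ι → V)
    (s : Finset ι) : FiniteDimensional K (span K (e '' ↑s)) :=
  FiniteDimensional.span_of_finite K (s.finite_toSet.image e)

theorem Finset.sum_mul_sq_le_mul_sum_sq {ι : Type*} {s : Finset ι} {c d : ι → ℝ} {D : ℝ}
    (h : ∀ i ∈ s, c i ≠ 0 → d i ≤ D) : ∑ i ∈ s, d i * c i ^ 2 ≤ D * ∑ i ∈ s, c i ^ 2 := by
  rw [Finset.mul_sum]
  refine Finset.sum_le_sum fun i hi => ?_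
  by_cases hc : c i = 0
  · simp [hc]
  · exact mul_le_mul_of_nonneg_right (h i hi hc) (sq_nonneg _)

theorem Finset.mul_sum_sq_le_sum_mul_sq {ι : Type*} {s : Finset ι} {c d : ι → ℝ} {D : ℝ}
    (h : ∀ i ∈ s, c i ≠ 0 → D ≤ d i) : D * ∑ i ∈ s, c i ^ 2 ≤ ∑ i ∈ s, d i * c i ^ 2 := by
  have := Finset.sum_mul_sq_le_mul_sum_sq (c := c) (d := -d) (D := -D)
    fun i hi hc => neg_le_neg (h i hi hc)
  simp only [Pi.neg_apply, neg_mul, Finset.sum_neg_distrib] at this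
  linarith

section InnerProductSpace

variable {ι E : Type*} [NormedAddCommGroup E] [InnerProductSpace ℝ E]

theorem Submodule.inner_starProjection_of_mem {U : Submodule ℝ E} [U.HasOrthogonalProjection]
    {y : E} (hy : y ∈ U) (x : E) : ⟪y, U.starProjection x⟫ = ⟪y, x⟫ := by
  rw [← inner_starProjection_left_eq_right, starProjection_eq_self_iff.mpr hy]

theorem Submodule.norm_starProjection_sq_le_norm_starProjection_starProjection
    {U W : Submodule ℝ E} [U.HasOrthogonalProjection] [W.HasOrthogonalProjection]
    {u : E} (hu : u ∈ U) (hu1 : ‖u‖ = 1) :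
    ‖W.starProjection u‖ ^ 2 ≤ ‖U.starProjection (W.starProjection u)‖ :=
  calc ‖W.starProjection u‖ ^ 2 = ⟪W.starProjection u, u⟫ := by
        rw [← real_inner_self_eq_norm_sq,
          inner_starProjection_of_mem (starProjection_apply_mem _ _)]
    _ = ⟪u, U.starProjection (W.starProjection u)⟫ := by
        rw [real_inner_comm, inner_starProjection_of_mem hu]
    _ ≤ ‖U.starProjection (W.starProjection u)‖ := by
        simpa [hu1] using real_inner_le_norm u (U.starProjection (W.starProjection u))

theorem Submodule.exists_norm_eq_one_forall_inner_eq_zero (U : Submodule ℝ E)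
    [FiniteDimensional ℝ U] (c : ι → E) {t : Finset ι} (ht : t.card < Module.finrank ℝ U) :
    ∃ u ∈ U, ‖u‖ = 1 ∧ ∀ i ∈ t, ⟪c i, u⟫ = 0 := by
  let f : U →ₗ[ℝ] (t → ℝ) := LinearMap.pi fun i => (innerₛₗ ℝ (c i)).comp U.subtype
  obtain ⟨v, hv, hv0⟩ :=
    exists_mem_ne_zero_of_ne_bot (LinearMap.ker_ne_bot_of_finrank_lt (f := f) (by simpa using ht))
  refine ⟨‖(v : E)‖⁻¹ • (v : E), U.smul_mem _ v.2, norm_smul_inv_norm (by simpa using hv0),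
    fun i hi => ?_⟩
  have hvi : ⟪c i, (v : E)⟫ = 0 := congrFun (LinearMap.mem_ker.mp hv) ⟨i, hi⟩
  rw [real_inner_smul_right, hvi, mul_zero]

def OrthonormalOn [DecidableEq ι] (e : ι → E) (s : Finset ι) : Prop :=
  ∀ i ∈ s, ∀ j ∈ s, ⟪e i, e j⟫ = if i = j then 1 else 0

variable [DecidableEq ι] {e : ι → E} {s : Finset ι}

namespace OrthonormalOn

theorem mono (he : OrthonormalOn e s) {t : Finset ι} (hts : t ⊆ s) : OrthonormalOn e t :=
  fun i hi j hj => he i (hts hi) j (hts hj)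

theorem inner_sum_smul (he : OrthonormalOn e s) (c : ι → ℝ) {j : ι} (hj : j ∈ s) :
    ⟪e j, ∑ i ∈ s, c i • e i⟫ = c j := by
  rw [inner_sum, Finset.sum_eq_single_of_mem j hj]
  · rw [real_inner_smul_right, he j hj j hj, if_pos rfl, mul_one]
  · intro i hi hij
    rw [real_inner_smul_right, he j hj i hi, if_neg (Ne.symm hij), mul_zero]

theorem inner_sum_smul_sum_smul (he : OrthonormalOn e s) (c d : ι → ℝ) :
    ⟪∑ i ∈ s, c i • e i, ∑ i ∈ s, d i • e i⟫ = ∑ i ∈ s, c i * d i := by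
  rw [sum_inner]
  exact Finset.sum_congr rfl fun i hi => by rw [real_inner_smul_left, he.inner_sum_smul d hi]

theorem eq_sum_inner_smul (he : OrthonormalOn e s) {x : E} (hx : x ∈ span ℝ (e '' s)) :
    x = ∑ i ∈ s, ⟪e i, x⟫ • e i := by
  induction hx using Submodule.span_induction with
  | mem _ hy =>
    obtain ⟨j, hj, rfl⟩ := hy
    rw [Finset.sum_congr rfl fun i hi => by rw [he i hi j hj]]
    simp [Finset.mem_coe.mp hj]
  | zero => simp
  | add y z _ _ hy hz =>
    simp only [inner_add_right, add_smul, Finset.sum_add_distrib]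
    rw [← hy, ← hz]
  | smul a y _ hy =>
    simp only [real_inner_smul_right, mul_smul]
    rw [← Finset.smul_sum, ← hy]

theorem inner_eq_zero_of_mem_span (he : OrthonormalOn e s) {t : Finset ι} (hts : t ⊆ s)
    {i : ι} (hi : i ∈ s) (hit : i ∉ t) {x : E} (hx : x ∈ span ℝ (e '' t)) : ⟪e i, x⟫ = 0 := by
  rw [(he.mono hts).eq_sum_inner_smul hx, inner_sum]
  refine Finset.sum_eq_zero fun j hj => ?_
  rw [real_inner_smul_right, he i hi j (hts hj), if_neg (ne_of_mem_of_not_mem hj hit).symm,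
    mul_zero]

theorem norm_sq_eq_sum (he : OrthonormalOn e s) {x : E} (hx : x ∈ span ℝ (e '' s)) :
    ‖x‖ ^ 2 = ∑ i ∈ s, ⟪e i, x⟫ ^ 2 := by
  rw [← real_inner_self_eq_norm_sq]
  conv_lhs => rw [he.eq_sum_inner_smul hx]
  rw [he.inner_sum_smul_sum_smul]
  simp only [sq]

theorem norm_starProjection_sq_eq_sum (he : OrthonormalOn e s) (x : E) :
    ‖(span ℝ (e '' s)).starProjection x‖ ^ 2 = ∑ i ∈ s, ⟪e i, x⟫ ^ 2 := by
  rw [he.norm_sq_eq_sum (starProjection_apply_mem _ x)]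
  refine Finset.sum_congr rfl fun i hi => ?_
  rw [inner_starProjection_of_mem (subset_span (Set.mem_image_of_mem e hi))]

theorem inner_map_self_eq_sum (he : OrthonormalOn e s) {A : E →L[ℝ] E} {d : ι → ℝ}
    (hA : ∀ i ∈ s, A (e i) = d i • e i) {x : E} (hx : x ∈ span ℝ (e '' s)) :
    ⟪x, A x⟫ = ∑ i ∈ s, d i * ⟪e i, x⟫ ^ 2 := by
  have hAx : A x = ∑ i ∈ s, (d i * ⟪e i, x⟫) • e i := by
    conv_lhs => rw [he.eq_sum_inner_smul hx]
    rw [map_sum]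
    exact Finset.sum_congr rfl fun i hi => by rw [map_smul, hA i hi, smul_smul, mul_comm]
  calc ⟪x, A x⟫ = ⟪∑ i ∈ s, ⟪e i, x⟫ • e i, ∑ i ∈ s, (d i * ⟪e i, x⟫) • e i⟫ := by
        rw [← he.eq_sum_inner_smul hx, hAx]
    _ = ∑ i ∈ s, d i * ⟪e i, x⟫ ^ 2 := by
        rw [he.inner_sum_smul_sum_smul]
        exact Finset.sum_congr rfl fun i _ => by ring

theorem norm_sq_eq_sum_add (he : OrthonormalOn e s) (x : E) :
    ‖x‖ ^ 2 = ∑ i ∈ s, ⟪e i, x⟫ ^ 2 + ‖(span ℝ (e '' s))ᗮ.starProjection x‖ ^ 2 := by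
  rw [← he.norm_starProjection_sq_eq_sum]
  exact norm_sq_eq_add_norm_sq_starProjection x _

theorem finrank_span (he : OrthonormalOn e s) : Module.finrank ℝ (span ℝ (e '' s)) = s.card := by
  have ho : Orthonormal ℝ (fun i : (s : Set ι) => e i) := by
    rw [orthonormal_iff_ite]
    intro i j
    rw [he i i.2 j j.2]
    exact if_congr Subtype.ext_iff.symm rfl rfl
  rw [Set.image_eq_range, finrank_span_eq_card ho.linearIndependent]
  simp

end OrthonormalOn

variable {T : E →L[ℝ] E}

theorem inner_apply_self_eq_sum_add (hT : ∀ x y, ⟪T x, y⟫ = ⟪x, T y⟫) {μ : ι → ℝ}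
    (he : OrthonormalOn e s) (hTe : ∀ i ∈ s, T (e i) = μ i • e i) (x : E) :
    ⟪x, T x⟫ = ∑ i ∈ s, μ i * ⟪e i, x⟫ ^ 2 +
      ⟪(span ℝ (e '' s))ᗮ.starProjection x, T ((span ℝ (e '' s))ᗮ.starProjection x)⟫ := by
  set U := span ℝ (e '' s)
  set a := U.starProjection x
  set b := Uᗮ.starProjection x
  have hTU : U ≤ U.comap (T : E →ₗ[ℝ] E) := span_le.mpr fun _ ⟨i, hi, hei⟩ => by
    rw [← hei, SetLike.mem_coe, Submodule.mem_comap, ContinuousLinearMap.coe_coe, hTe i hi]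
    exact smul_mem _ _ (subset_span (Set.mem_image_of_mem e hi))
  have ha : a ∈ U := starProjection_apply_mem U x
  have hb : b ∈ Uᗮ := starProjection_apply_mem Uᗮ x
  have hTa : T a ∈ U := hTU ha
  have haTa : ⟪a, T a⟫ = ∑ i ∈ s, μ i * ⟪e i, x⟫ ^ 2 := by
    rw [he.inner_map_self_eq_sum hTe ha]
    exact Finset.sum_congr rfl fun i hi => by
      rw [inner_starProjection_of_mem (subset_span (Set.mem_image_of_mem e hi))]
  have haTb : ⟪a, T b⟫ = 0 := by
    rw [← hT]
    exact inner_right_of_mem_orthogonal hTa hb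
  have hbTa : ⟪b, T a⟫ = 0 := inner_left_of_mem_orthogonal hTa hb
  calc ⟪x, T x⟫ = ⟪a + b, T (a + b)⟫ := by rw [starProjection_add_starProjection_orthogonal]
    _ = ⟪a, T a⟫ + ⟪a, T b⟫ + ⟪b, T a⟫ + ⟪b, T b⟫ := by
        rw [map_add, inner_add_left, inner_add_right, inner_add_right]
        ring
    _ = _ := by rw [haTa, haTb, hbTa, add_zero, add_zero]

theorem inner_apply_self_le_mul_norm_sq (hT : ∀ x y, ⟪T x, y⟫ = ⟪x, T y⟫) {μ : ι → ℝ}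
    (he : OrthonormalOn e s) (hTe : ∀ i ∈ s, T (e i) = μ i • e i) {D : ℝ}
    (hres : ∀ w ∈ (span ℝ (e '' s))ᗮ, ⟪w, T w⟫ ≤ D * ‖w‖ ^ 2) {x : E}
    (hx : ∀ i ∈ s, ⟪e i, x⟫ ≠ 0 → μ i ≤ D) : ⟪x, T x⟫ ≤ D * ‖x‖ ^ 2 := by
  rw [inner_apply_self_eq_sum_add hT he hTe, he.norm_sq_eq_sum_add, mul_add]
  exact add_le_add (Finset.sum_mul_sq_le_mul_sum_sq hx) (hres _ (starProjection_apply_mem _ _))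

theorem mul_norm_starProjection_sq_le_inner_apply_self (hT : ∀ x y, ⟪T x, y⟫ = ⟪x, T y⟫)
    (hTpos : ∀ u, 0 ≤ ⟪u, T u⟫) {μ : ι → ℝ} (he : OrthonormalOn e s)
    (hTe : ∀ i ∈ s, T (e i) = μ i • e i) {D : ℝ} (hD : ∀ i ∈ s, D ≤ μ i) (x : E) :
    D * ‖(span ℝ (e '' s)).starProjection x‖ ^ 2 ≤ ⟪x, T x⟫ := by
  rw [inner_apply_self_eq_sum_add hT he hTe, he.norm_starProjection_sq_eq_sum]
  have := Finset.mul_sum_sq_le_sum_mul_sq (c := fun i => ⟪e i, x⟫) fun i hi _ => hD i hi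
  linarith [hTpos ((span ℝ (e '' s))ᗮ.starProjection x)]

theorem ritz_inner_apply_self_eq_sum {lam : ι → ℝ} (he : OrthonormalOn e s)
    (hritz : ∀ i ∈ s, (span ℝ (e '' s)).starProjection (T (e i)) = lam i • e i) {v : E}
    (hv : v ∈ span ℝ (e '' s)) : ⟪v, T v⟫ = ∑ i ∈ s, lam i * ⟪e i, v⟫ ^ 2 := by
  rw [← inner_starProjection_of_mem hv (T v)]
  exact he.inner_map_self_eq_sum (A := (span ℝ (e '' s)).starProjection ∘L T) hritz hv

theorem ritz_value_nonneg (hTpos : ∀ u, 0 ≤ ⟪u, T u⟫) {lam : ι → ℝ} (he : OrthonormalOn e s)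
    (hritz : ∀ i ∈ s, (span ℝ (e '' s)).starProjection (T (e i)) = lam i • e i) {k : ι}
    (hk : k ∈ s) : 0 ≤ lam k := by
  have := hTpos (e k)
  rwa [← inner_starProjection_of_mem (subset_span (Set.mem_image_of_mem e hk)), hritz k hk,
    real_inner_smul_right, he k hk k hk, if_pos rfl, mul_one] at this

end InnerProductSpace

section RayleighRitz

variable {E : Type*} [NormedAddCommGroup E] [InnerProductSpace ℝ E] {T : E →L[ℝ] E}

theorem proj_eq_starProjection (U : Submodule ℝ E) [h : U.HasOrthogonalProjection] :
    proj U = U.starProjection := by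
  simp only [proj, dif_pos h]
  rfl

theorem one_sub_d2_sq_le_norm_starProjection_sq {U W : Submodule ℝ E}
    [U.HasOrthogonalProjection] [W.HasOrthogonalProjection] {u : E} (hu : u ∈ U)
    (hu1 : ‖u‖ = 1) : 1 - d2 U W ^ 2 ≤ ‖W.starProjection u‖ ^ 2 := by
  have hgap : ‖Wᗮ.starProjection u‖ ≤ d2 U W := by
    simpa [d2, proj_eq_starProjection, starProjection_eq_self_iff.mpr hu, hu1] using
      ((proj Wᗮ) ∘L proj U).le_opNorm u
  have hpyth := norm_sq_eq_add_norm_sq_starProjection u W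
  rw [hu1] at hpyth
  nlinarith [norm_nonneg (Wᗮ.starProjection u)]

theorem inner_apply_self_le_eigenvalue_mul_norm_sq (hT : ∀ x y, ⟪T x, y⟫ = ⟪x, T y⟫)
    {η : ℕ → E} {μ : ℕ → ℝ} {r k : ℕ} (hη : OrthonormalOn η (Finset.Icc 1 r))
    (hTη : ∀ i ∈ Finset.Icc 1 r, T (η i) = μ i • η i) (hμ : AntitoneOn μ (Set.Icc 1 (r + 1)))
    (hres : ∀ w ∈ (span ℝ (η '' ↑(Finset.Icc 1 r)))ᗮ, ⟪w, T w⟫ ≤ μ (r + 1) * ‖w‖ ^ 2)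
    (hk1 : 1 ≤ k) (hkr : k ≤ r + 1) {x : E} (hx : ∀ i ∈ Finset.Ico 1 k, ⟪η i, x⟫ = 0) :
    ⟪x, T x⟫ ≤ μ k * ‖x‖ ^ 2 := by
  refine inner_apply_self_le_mul_norm_sq hT hη hTη (fun w hw => (hres w hw).trans ?_)
    fun i hi hne => ?_
  · exact mul_le_mul_of_nonneg_right (hμ ⟨hk1, hkr⟩ ⟨by omega, le_rfl⟩ hkr) (sq_nonneg _)
  · rw [Finset.mem_Icc] at hi
    have hki : k ≤ i := by
      by_contra hik
      exact hne (hx i (Finset.mem_Ico.mpr ⟨hi.1, by omega⟩))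
    exact hμ ⟨hk1, hkr⟩ ⟨hi.1, by omega⟩ hki

theorem inner_apply_self_le_ritz_value_mul_norm_sq {γ : ℕ → E} {lam : ℕ → ℝ} {n k : ℕ}
    (hγ : OrthonormalOn γ (Finset.Icc 1 n))
    (hritz : ∀ i ∈ Finset.Icc 1 n,
      (span ℝ (γ '' ↑(Finset.Icc 1 n))).starProjection (T (γ i)) = lam i • γ i)
    (hlam : AntitoneOn lam (Set.Icc 1 n)) (hk1 : 1 ≤ k) (hkn : k ≤ n) {v : E}
    (hv : v ∈ span ℝ (γ '' ↑(Finset.Icc 1 n))) (hvγ : ∀ i ∈ Finset.Ico 1 k, ⟪γ i, v⟫ = 0) :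
    ⟪v, T v⟫ ≤ lam k * ‖v‖ ^ 2 := by
  rw [ritz_inner_apply_self_eq_sum hγ hritz hv, hγ.norm_sq_eq_sum hv]
  refine Finset.sum_mul_sq_le_mul_sum_sq fun i hi hne => ?_
  rw [Finset.mem_Icc] at hi
  have hki : k ≤ i := by
    by_contra hik
    exact hne (hvγ i (Finset.mem_Ico.mpr ⟨hi.1, by omega⟩))
  exact hlam ⟨hk1, hkn⟩ hi hki

theorem ritz_value_mul_norm_sq_le_inner_apply_self {γ : ℕ → E} {lam : ℕ → ℝ} {n k : ℕ}
    (hγ : OrthonormalOn γ (Finset.Icc 1 n))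
    (hritz : ∀ i ∈ Finset.Icc 1 n,
      (span ℝ (γ '' ↑(Finset.Icc 1 n))).starProjection (T (γ i)) = lam i • γ i)
    (hlam : AntitoneOn lam (Set.Icc 1 n)) (hk1 : 1 ≤ k) (hkn : k ≤ n) {w : E}
    (hw : w ∈ span ℝ (γ '' ↑(Finset.Icc 1 k))) : lam k * ‖w‖ ^ 2 ≤ ⟪w, T w⟫ := by
  have hkn' : Finset.Icc 1 k ⊆ Finset.Icc 1 n := Finset.Icc_subset_Icc_right hkn
  have hwΦ : w ∈ span ℝ (γ '' ↑(Finset.Icc 1 n)) :=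
    span_mono (Set.image_mono (Finset.coe_subset.mpr hkn')) hw
  rw [ritz_inner_apply_self_eq_sum hγ hritz hwΦ, hγ.norm_sq_eq_sum hwΦ]
  refine Finset.mul_sum_sq_le_sum_mul_sq fun i hi hne => ?_
  have hik : i ≤ k := by
    by_contra hki
    exact hne (hγ.inner_eq_zero_of_mem_span hkn' hi (fun h => hki (Finset.mem_Icc.mp h).2) hw)
  exact hlam (Finset.mem_Icc.mp hi) ⟨hk1, hkn⟩ hik

theorem ritz_value_le_eigenvalue (hT : ∀ x y, ⟪T x, y⟫ = ⟪x, T y⟫) {η γ : ℕ → E}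
    {μ lam : ℕ → ℝ} {r n k : ℕ} (hη : OrthonormalOn η (Finset.Icc 1 r))
    (hTη : ∀ i ∈ Finset.Icc 1 r, T (η i) = μ i • η i) (hμ : AntitoneOn μ (Set.Icc 1 (r + 1)))
    (hres : ∀ w ∈ (span ℝ (η '' ↑(Finset.Icc 1 r)))ᗮ, ⟪w, T w⟫ ≤ μ (r + 1) * ‖w‖ ^ 2)
    (hγ : OrthonormalOn γ (Finset.Icc 1 n))
    (hritz : ∀ i ∈ Finset.Icc 1 n,
      (span ℝ (γ '' ↑(Finset.Icc 1 n))).starProjection (T (γ i)) = lam i • γ i)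
    (hlam : AntitoneOn lam (Set.Icc 1 n)) (hk1 : 1 ≤ k) (hkr : k ≤ r + 1) (hkn : k ≤ n) :
    lam k ≤ μ k := by
  have hγk := hγ.mono (Finset.Icc_subset_Icc_right hkn)
  obtain ⟨w, hw, hw1, hwη⟩ := exists_norm_eq_one_forall_inner_eq_zero
    (span ℝ (γ '' ↑(Finset.Icc 1 k))) η (t := Finset.Ico 1 k)
    (by rw [hγk.finrank_span, Nat.card_Ico, Nat.card_Icc]; omega)
  simpa [hw1] using (ritz_value_mul_norm_sq_le_inner_apply_self hγ hritz hlam hk1 hkn hw).trans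
    (inner_apply_self_le_eigenvalue_mul_norm_sq hT hη hTη hμ hres hk1 hkr hwη)

theorem one_sub_d2_sq_mul_eigenvalue_le_ritz_value (hT : ∀ x y, ⟪T x, y⟫ = ⟪x, T y⟫)
    (hTpos : ∀ u, 0 ≤ ⟪u, T u⟫) {η γ : ℕ → E} {μ lam : ℕ → ℝ} {n k : ℕ}
    (hη : OrthonormalOn η (Finset.Icc 1 k)) (hTη : ∀ i ∈ Finset.Icc 1 k, T (η i) = μ i • η i)
    (hμ : AntitoneOn μ (Set.Icc 1 k)) (hμk : 0 ≤ μ k) (hγ : OrthonormalOn γ (Finset.Icc 1 n))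
    (hritz : ∀ i ∈ Finset.Icc 1 n,
      (span ℝ (γ '' ↑(Finset.Icc 1 n))).starProjection (T (γ i)) = lam i • γ i)
    (hlam : AntitoneOn lam (Set.Icc 1 n)) (hk1 : 1 ≤ k) (hkn : k ≤ n) :
    (1 - d2 (span ℝ (η '' ↑(Finset.Icc 1 k))) (span ℝ (γ '' ↑(Finset.Icc 1 n))) ^ 2) * μ k
      ≤ lam k := by
  set Ek := span ℝ (η '' ↑(Finset.Icc 1 k))
  set Φ := span ℝ (γ '' ↑(Finset.Icc 1 n))
  obtain ⟨u, hu, hu1, huγ⟩ := Ek.exists_norm_eq_one_forall_inner_eq_zero γ (t := Finset.Ico 1 k)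
    (by rw [hη.finrank_span, Nat.card_Ico, Nat.card_Icc]; omega)
  set v := Φ.starProjection u
  have hgap : 1 - d2 Ek Φ ^ 2 ≤ ‖v‖ ^ 2 := one_sub_d2_sq_le_norm_starProjection_sq hu hu1
  have hvEk : ‖v‖ ^ 2 ≤ ‖Ek.starProjection v‖ :=
    norm_starProjection_sq_le_norm_starProjection_starProjection hu hu1
  have hlow : μ k * ‖Ek.starProjection v‖ ^ 2 ≤ ⟪v, T v⟫ :=
    mul_norm_starProjection_sq_le_inner_apply_self hT hTpos hη hTη
      (fun i hi => hμ (Finset.mem_Icc.mp hi) ⟨hk1, le_rfl⟩ (Finset.mem_Icc.mp hi).2) v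
  have hhigh : ⟪v, T v⟫ ≤ lam k * ‖v‖ ^ 2 :=
    inner_apply_self_le_ritz_value_mul_norm_sq hγ hritz hlam hk1 hkn
      (starProjection_apply_mem _ _) fun i hi => by
        rw [inner_starProjection_of_mem (subset_span (Set.mem_image_of_mem γ
          (Finset.Ico_subset_Icc_self.trans (Finset.Icc_subset_Icc_right hkn) hi))), huγ i hi]
  have hkey : μ k * ‖v‖ ^ 2 * ‖v‖ ^ 2 ≤ lam k * ‖v‖ ^ 2 :=
    calc μ k * ‖v‖ ^ 2 * ‖v‖ ^ 2 = μ k * (‖v‖ ^ 2) ^ 2 := by ring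
      _ ≤ μ k * ‖Ek.starProjection v‖ ^ 2 := by gcongr
      _ ≤ lam k * ‖v‖ ^ 2 := hlow.trans hhigh
  rcases (sq_nonneg ‖v‖).eq_or_lt with hv0 | hv0
  · rw [← hv0] at hgap
    exact (mul_nonpos_of_nonpos_of_nonneg (by linarith) hμk).trans
      (ritz_value_nonneg hTpos hγ hritz (Finset.mem_Icc.mpr ⟨hk1, hkn⟩))
  · calc (1 - d2 Ek Φ ^ 2) * μ k ≤ ‖v‖ ^ 2 * μ k := by gcongr
      _ = μ k * ‖v‖ ^ 2 := mul_comm _ _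
      _ ≤ lam k := le_of_mul_le_mul_right hkey hv0

end RayleighRitz

theorem stmt2_general {H : Type*} [NormedAddCommGroup H] [InnerProductSpace ℝ H] [CompleteSpace H]
    (T : H →L[ℝ] H)
    (hTsa : ∀ x y : H, ⟪T x, y⟫ = ⟪x, T y⟫)
    (hTpos : ∀ u : H, 0 ≤ ⟪u, T u⟫)
    (r : ℕ) (η : ℕ → H) (μ : ℕ → ℝ)
    (hη : ∀ i ∈ Set.Icc 1 r, ∀ j ∈ Set.Icc 1 r, ⟪η i, η j⟫ = if i = j then (1 : ℝ) else 0)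
    (hTeig : ∀ i ∈ Set.Icc 1 r, T (η i) = μ i • η i)
    (hμmono : ∀ i ∈ Set.Icc 1 (r + 1), ∀ j ∈ Set.Icc 1 (r + 1), i ≤ j → μ j ≤ μ i)
    (hμr1 : 0 ≤ μ (r + 1))
    (hTres : ∀ w ∈ (span ℝ (η '' Set.Icc 1 r))ᗮ, ⟪w, T w⟫ ≤ μ (r + 1) * ‖w‖ ^ 2)
    (n : ℕ) (Φ : Submodule ℝ H)
    (lam : ℕ → ℝ) (γ : ℕ → H)
    (hγ : ∀ i ∈ Set.Icc 1 n, ∀ j ∈ Set.Icc 1 n, ⟪γ i, γ j⟫ = if i = j then (1 : ℝ) else 0)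
    (hγspan : span ℝ (γ '' Set.Icc 1 n) = Φ)
    (hγeig : ∀ i ∈ Set.Icc 1 n, proj Φ (T (γ i)) = lam i • γ i)
    (hlam : ∀ i ∈ Set.Icc 1 n, ∀ j ∈ Set.Icc 1 n, i ≤ j → lam j ≤ lam i)
    (k : ℕ) (hk1 : 1 ≤ k) (hkr : k ≤ r) (hkn : k ≤ n) :
    (1 - d2 (span ℝ (η '' Set.Icc 1 k)) Φ ^ 2) * μ k ≤ lam k ∧ lam k ≤ μ k := by
  subst hγspan
  simp only [← Finset.coe_Icc, proj_eq_starProjection] at hη hTeig hTres hγ hγeig ⊢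
  change OrthonormalOn η (Finset.Icc 1 r) at hη
  change OrthonormalOn γ (Finset.Icc 1 n) at hγ
  have hkr' : Finset.Icc 1 k ⊆ Finset.Icc 1 r := Finset.Icc_subset_Icc_right hkr
  have hμk : 0 ≤ μ k :=
    hμr1.trans (hμmono k ⟨hk1, by omega⟩ (r + 1) ⟨by omega, le_rfl⟩ (by omega))
  exact ⟨one_sub_d2_sq_mul_eigenvalue_le_ritz_value hTsa hTpos (hη.mono hkr')
      (fun i hi => hTeig i (hkr' hi))
      (AntitoneOn.mono hμmono (Set.Icc_subset_Icc_right (by omega))) hμk hγ hγeig hlam hk1 hkn,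
    ritz_value_le_eigenvalue hTsa hη hTeig hμmono hTres hγ hγeig hlam hk1 (by omega) hkn⟩

/-- Rayleigh–Ritz eigenvalue bounds:
`(1 − d₂(span{η₁..η_k}, Φ)²) μ_k ≤ λ_k ≤ μ_k`. -/
theorem stmt2 {H : Type*} [NormedAddCommGroup H] [InnerProductSpace ℝ H] [CompleteSpace H]
    (T : H →L[ℝ] H)
    (hTsa : ∀ x y : H, ⟪T x, y⟫ = ⟪x, T y⟫)
    (hTpos : ∀ u : H, 0 ≤ ⟪u, T u⟫)
    (r : ℕ) (hr : 1 ≤ r) (η : ℕ → H) (μ : ℕ → ℝ)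
    (hη : ∀ i ∈ Set.Icc 1 r, ∀ j ∈ Set.Icc 1 r, ⟪η i, η j⟫ = if i = j then (1 : ℝ) else 0)
    (hTeig : ∀ i ∈ Set.Icc 1 r, T (η i) = μ i • η i)
    (hμmono : ∀ i ∈ Set.Icc 1 (r + 1), ∀ j ∈ Set.Icc 1 (r + 1), i ≤ j → μ j ≤ μ i)
    (hμr : 0 < μ r) (hμr1 : 0 ≤ μ (r + 1))
    (hTinv : ∀ w ∈ (span ℝ (η '' Set.Icc 1 r))ᗮ, T w ∈ (span ℝ (η '' Set.Icc 1 r))ᗮ)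
    (hTres : ∀ w ∈ (span ℝ (η '' Set.Icc 1 r))ᗮ, ⟪w, T w⟫ ≤ μ (r + 1) * ‖w‖ ^ 2)
    (n : ℕ) (Φ : Submodule ℝ H) (hΦfd : FiniteDimensional ℝ Φ) (hΦn : Module.finrank ℝ Φ = n)
    (lam : ℕ → ℝ) (γ : ℕ → H)
    (hγ : ∀ i ∈ Set.Icc 1 n, ∀ j ∈ Set.Icc 1 n, ⟪γ i, γ j⟫ = if i = j then (1 : ℝ) else 0)
    (hγspan : span ℝ (γ '' Set.Icc 1 n) = Φ)
    (hγeig : ∀ i ∈ Set.Icc 1 n, proj Φ (T (γ i)) = lam i • γ i)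
    (hlam : ∀ i ∈ Set.Icc 1 n, ∀ j ∈ Set.Icc 1 n, i ≤ j → lam j ≤ lam i)
    (k : ℕ) (hk1 : 1 ≤ k) (hkr : k ≤ r) (hkn : k ≤ n) :
    (1 - d2 (span ℝ (η '' Set.Icc 1 k)) Φ ^ 2) * μ k ≤ lam k ∧ lam k ≤ μ k :=
  stmt2_general T hTsa hTpos r η μ hη hTeig hμmono hμr1 hTres n Φ lam γ hγ hγspan hγeig hlam k hk1
    hkr hkn
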